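/- The complete digraph on 3 vertices (with adjacency relation Adj u v ↔ u ≠ v, i.e., a bidirectional edge between every pair of distinct vertices and no loops) is 2-out but does not contain 2 pairwise vertex-disjoint directed cycles; consequently f(2) ≥ 3. -/

import Mathlib

/-- A nonempty list of pairwise distinct vertices forms a directed cycle:
consecutive vertices are adjacent and the last vertex is adjacent to the first.
Lists of length 1 are loops, lists of length 2 are bidirectional edges. -/
def IsCycle {V : Type} (Adj : V → V → Prop) (c : List V) : Prop :=
  c ≠ [] ∧ c.Nodup ∧ c.Chain' Adj ∧ ∀ x ∈ c.getLast?, ∀ y ∈ c.head?, Adj x y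

/-- The digraph `Adj` contains `k` pairwise vertex-disjoint directed cycles. -/
def HasDisjointCycles {V : Type} (Adj : V → V → Prop) (k : ℕ) : Prop :=
  ∃ c : Fin k → List V, (∀ i, IsCycle Adj (c i)) ∧
    Pairwise fun i j => ∀ x, x ∈ c i → x ∉ c j

/-!
Every cycle of a loopless digraph has at least two vertices, so `k` vertex-disjoint cycles
use at least `2 * k` vertices; three vertices cannot carry two of them.
-/

section Loopless

variable {V : Type} {Adj : V → V → Prop}

lemma IsCycle.two_le_length (hloop : ∀ v, ¬ Adj v v) {c : List V} (hc : IsCycle Adj c) :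
    2 ≤ c.length := by
  obtain ⟨hne, -, -, hclose⟩ := hc
  match c with
  | [] => exact absurd rfl hne
  | [a] => exact absurd (hclose a rfl a rfl) (hloop a)
  | _ :: _ :: _ => simp

lemma HasDisjointCycles.two_mul_le_card [Fintype V] [DecidableEq V] (hloop : ∀ v, ¬ Adj v v)
    {k : ℕ} (h : HasDisjointCycles Adj k) : 2 * k ≤ Fintype.card V := by
  obtain ⟨c, hcyc, hdisj⟩ := h
  have hpair : ((Finset.univ : Finset (Fin k)) : Set (Fin k)).PairwiseDisjoint
      fun i => (c i).toFinset := by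
    intro i _ j _ hij
    exact Finset.disjoint_left.mpr fun x hx => by simpa using hdisj hij x (by simpa using hx)
  calc 2 * k = ∑ _i : Fin k, 2 := by simp [mul_comm]
    _ ≤ ∑ i, (c i).toFinset.card := Finset.sum_le_sum fun i _ => by
        rw [List.toFinset_card_of_nodup (hcyc i).2.1]
        exact (hcyc i).two_le_length hloop
    _ = (Finset.univ.biUnion fun i => (c i).toFinset).card := (Finset.card_biUnion hpair).symm
    _ ≤ Fintype.card V := Finset.card_le_univ _

end Loopless

lemma Set.ncard_setOf_ne {V : Type} [Finite V] (v : V) : {u | v ≠ u}.ncard = Nat.card V - 1 := by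
  have : {u | v ≠ u} = {v}ᶜ := by ext; simp [eq_comm]
  rw [this, Set.ncard_compl, Set.ncard_singleton]

/-- The complete digraph on 3 vertices (adjacency `u ≠ v`) is 2-out but
contains no two vertex-disjoint directed cycles, hence `f(2) ≥ 3`. -/
theorem complete_digraph_three :
    (∀ v : Fin 3, 2 ≤ {u | v ≠ u}.ncard) ∧
    ¬ HasDisjointCycles (fun u v : Fin 3 => u ≠ v) 2 := by
  refine ⟨fun v => by simp [Set.ncard_setOf_ne], fun h => ?_⟩
  have hcard := h.two_mul_le_card fun v hv => hv rfl
  simp at hcard
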